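/- Let X be a finite-dimensional real vector space and q a 1-bounded asymmetric norm on X. Then every extreme point of B_1^q[0] + θ_q belongs to B_1^{q^s}[0]; in particular, the set of extreme points of B_1^q[0] + θ_q is q^s-bounded. -/

import Mathlib

open Pointwise Set

/-- An asymmetric norm on a real vector space `X`. -/
structure IsAsymmetricNorm {X : Type*} [AddCommGroup X] [Module ℝ X] (q : X → ℝ) : Prop where
  nonneg : ∀ x, 0 ≤ q x
  smul_eq : ∀ a : ℝ, 0 ≤ a → ∀ x, q (a • x) = a * q x
  add_le : ∀ x y, q (x + y) ≤ q x + q y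
  eq_zero : ∀ x, q x = 0 → q (-x) = 0 → x = 0

/-- The topology `τ_q` generated by the open balls of `q`. -/
def asymTop {X : Type*} [AddCommGroup X] [Module ℝ X] (q : X → ℝ) : TopologicalSpace X :=
  TopologicalSpace.generateFrom {U | ∃ x : X, ∃ ε : ℝ, 0 < ε ∧ U = {y | q (y - x) < ε}}

/-- The symmetrization `q^s` of `q`. -/
def symNorm {X : Type*} [AddCommGroup X] (q : X → ℝ) (x : X) : ℝ := max (q x) (q (-x))

/-- The cone `θ_q = {x : q x = 0}`. -/
def theta {X : Type*} [AddCommGroup X] (q : X → ℝ) : Set X := {x | q x = 0}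

/-- The closed ball `B_r^q[x] = {y : q (y - x) ≤ r}`. -/
def closedBallA {X : Type*} [AddCommGroup X] (q : X → ℝ) (x : X) (r : ℝ) : Set X :=
  {y | q (y - x) ≤ r}

/-- A set `K` is strongly compact (w.r.t. the asymmetric norm `q`) if there is a set `S`,
compact in the topology of the norm `q^s`, with `S ⊆ K ⊆ S + θ_q`. -/
def StronglyCompact {X : Type*} [AddCommGroup X] [Module ℝ X] (q : X → ℝ) (K : Set X) : Prop :=
  ∃ S : Set X, @IsCompact X (asymTop (symNorm q)) S ∧ S ⊆ K ∧ K ⊆ S + theta q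

/-- `q` is right bounded if `r • B_1^q[0] ⊆ B_1^{q^s}[0] + θ_q` for some `r > 0`. -/
def RightBounded {X : Type*} [AddCommGroup X] [Module ℝ X] (q : X → ℝ) : Prop :=
  ∃ r : ℝ, 0 < r ∧ r • closedBallA q 0 1 ⊆ closedBallA (symNorm q) 0 1 + theta q

/-- `q` is 1-bounded if `B_1^q[0] ⊆ B_1^{q^s}[0] + θ_q`. -/
def OneBounded {X : Type*} [AddCommGroup X] [Module ℝ X] (q : X → ℝ) : Prop :=
  closedBallA q 0 1 ⊆ closedBallA (symNorm q) 0 1 + theta q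

/-- Two asymmetric norms are equivalent if `κ·q ≤ p ≤ l·q` for some `κ, l > 0`. -/
def EquivNorms {X : Type*} [AddCommGroup X] (p q : X → ℝ) : Prop :=
  ∃ κ l : ℝ, 0 < κ ∧ 0 < l ∧ ∀ x, κ * q x ≤ p x ∧ p x ≤ l * q x

/-- `X` is strongly locally compact (w.r.t. `τ_q`) if every point has a local base of
strongly compact sets. -/
def StronglyLocallyCompact {X : Type*} [AddCommGroup X] [Module ℝ X] (q : X → ℝ) : Prop :=
  ∀ x : X, ∀ U ∈ @nhds X (asymTop q) x,
    ∃ K : Set X, StronglyCompact q K ∧ K ∈ @nhds X (asymTop q) x ∧ K ⊆ U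

/-!
Translating by `t ∈ θ_q` cannot increase `q`, so `B_1^q[0] + θ_q = B_1^q[0]`. If `x` is an
extreme point of this ball, 1-boundedness writes `x = s + t` with `q^s(s) ≤ 1` and `t ∈ θ_q`.
Both `x + t` and `x - t = s` lie in the ball and `x` is their midpoint, so `t = 0` and `x = s`.
-/

theorem eq_zero_of_add_mem_of_sub_mem_of_mem_extremePoints {𝕜 E : Type*} [Ring 𝕜]
    [LinearOrder 𝕜] [IsStrictOrderedRing 𝕜] [Invertible (2 : 𝕜)] [AddCommGroup E]
    [Module 𝕜 E] {A : Set E} {x v : E} (hx : x ∈ A.extremePoints 𝕜)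
    (hadd : x + v ∈ A) (hsub : x - v ∈ A) : v = 0 :=
  add_eq_left.mp (hx.2 hadd hsub (mem_openSegment_add_sub x v))

theorem closedBallA_symNorm_subset {X : Type*} [AddCommGroup X] (q : X → ℝ) (x : X) (r : ℝ) :
    closedBallA (symNorm q) x r ⊆ closedBallA q x r :=
  fun y (hy : symNorm q (y - x) ≤ r) => (le_max_left _ _).trans hy

namespace IsAsymmetricNorm

variable {X : Type*} [AddCommGroup X] [Module ℝ X] {q : X → ℝ}

theorem map_zero (hq : IsAsymmetricNorm q) : q 0 = 0 := by
  simpa using hq.smul_eq 0 le_rfl 0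

theorem add_mem_closedBallA_zero_of_mem_theta (hq : IsAsymmetricNorm q) {y t : X} {r : ℝ}
    (hy : y ∈ closedBallA q 0 r) (ht : t ∈ theta q) : y + t ∈ closedBallA q 0 r := by
  simp only [closedBallA, theta, mem_ofPred_eq, sub_zero] at hy ht ⊢
  linarith [hq.add_le y t]

theorem closedBallA_zero_add_theta (hq : IsAsymmetricNorm q) (r : ℝ) :
    closedBallA q 0 r + theta q = closedBallA q 0 r := by
  refine subset_antisymm ?_ fun y hy => ⟨y, hy, 0, hq.map_zero, add_zero y⟩
  exact add_subset_iff.mpr fun _ hy _ ht => hq.add_mem_closedBallA_zero_of_mem_theta hy ht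

theorem extremePoints_closedBallA_subset_symNorm (hq : IsAsymmetricNorm q) (h1 : OneBounded q) :
    (closedBallA q 0 1).extremePoints ℝ ⊆ closedBallA (symNorm q) 0 1 := by
  intro x hx
  obtain ⟨s, hs, t, ht, rfl⟩ := h1 hx.1
  have hsub : s + t - t ∈ closedBallA q 0 1 := by
    rw [add_sub_cancel_right]
    exact closedBallA_symNorm_subset q 0 1 hs
  obtain rfl : t = 0 := eq_zero_of_add_mem_of_sub_mem_of_mem_extremePoints hx
    (hq.add_mem_closedBallA_zero_of_mem_theta hx.1 ht) hsub
  simpa using hs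

end IsAsymmetricNorm

theorem statement19_general {X : Type*} [AddCommGroup X] [Module ℝ X]
    (q : X → ℝ) (hq : IsAsymmetricNorm q) (h1 : OneBounded q) :
    Set.extremePoints ℝ (closedBallA q 0 1 + theta q) ⊆ closedBallA (symNorm q) 0 1 ∧
    ∃ h : ℝ, 0 < h ∧
      Set.extremePoints ℝ (closedBallA q 0 1 + theta q) ⊆ h • closedBallA (symNorm q) 0 1 := by
  have key : (closedBallA q 0 1 + theta q).extremePoints ℝ ⊆ closedBallA (symNorm q) 0 1 := by
    rw [hq.closedBallA_zero_add_theta]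
    exact hq.extremePoints_closedBallA_subset_symNorm h1
  exact ⟨key, 1, one_pos, by rwa [one_smul]⟩

theorem statement19 {X : Type*} [AddCommGroup X] [Module ℝ X] [FiniteDimensional ℝ X]
    (q : X → ℝ) (hq : IsAsymmetricNorm q) (h1 : OneBounded q) :
    Set.extremePoints ℝ (closedBallA q 0 1 + theta q) ⊆ closedBallA (symNorm q) 0 1 ∧
    ∃ h : ℝ, 0 < h ∧
      Set.extremePoints ℝ (closedBallA q 0 1 + theta q) ⊆ h • closedBallA (symNorm q) 0 1 :=
  statement19_general q hq h1
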